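/- arXiv:1907.00919 — 2 statements merged into one kernel-verified Lean document; each statement's English description precedes it below -/
import Mathlib

section
/- A nonempty partition λ of n satisfies 2/n · Σ_{b∈λ} ct(b) = ct(b_2), where b_2 is the removable box of largest content (the box at the end of the first row of the largest initial rectangle), if and only if λ is a rectangle. -/
/-- A partition given as a weakly decreasing list of positive integers. -/
def IsPartition (l : List ℕ) : Prop :=
  l.Pairwise (· ≥ ·) ∧ ∀ x ∈ l, 0 < x

/-- Sum of contents `y - x` over the boxes of the Young diagram of `l`
(boxes in row `x+1` are `(x+1, y+1)` for `y < l[x]`, content `y - x`). -/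
def contentSum (l : List ℕ) : ℤ :=
  ∑ x ∈ Finset.range l.length, ∑ y ∈ Finset.range (l.getD x 0), ((y : ℤ) - (x : ℤ))

/-! Write `λ = (q^r) ++ D`, where every part of `D` is smaller than `q`. Removing the first row
lowers every other content by one; for the rectangle `q^r` this gives `2 Σ ct = r q (q - r)`, and
in general `2 Σ_{b∈λ} ct(b) - n (q - r) = 2 Σ_{b∈D} ct(b) - |D| (q + r)`. A row of `D` of length
`d ≤ q` contributes at most `d (d - 1) ≤ d (q - 1)` to `2 Σ_{b∈D} ct(b)`, so the right side is
negative unless `D` is empty. -/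

open Finset

theorem two_mul_sum_range_natCast (a : ℕ) : 2 * ∑ y ∈ range a, (y : ℤ) = a * (a - 1) := by
  induction a with
  | zero => simp
  | succ a ih => rw [sum_range_succ, mul_add, ih]; push_cast; ring

theorem List.sum_eq_sum_range_getD (l : List ℕ) :
    l.sum = ∑ x ∈ Finset.range l.length, l.getD x 0 := by
  induction l with
  | nil => simp
  | cons a t ih => rw [sum_cons, ih, length_cons, Finset.sum_range_succ', add_comm]; rfl

theorem contentSum_nil : contentSum [] = 0 := by simp [contentSum]

/-- Pushing the diagram of `t` one row down lowers each of its contents by one. -/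
theorem contentSum_cons (a : ℕ) (t : List ℕ) :
    contentSum (a :: t) = ∑ y ∈ range a, (y : ℤ) + contentSum t - t.sum := by
  have hsum : (t.sum : ℤ) = ∑ x ∈ range t.length, ∑ y ∈ range (t.getD x 0), (1 : ℤ) := by
    simp [t.sum_eq_sum_range_getD]
  rw [contentSum, contentSum, hsum, List.length_cons, sum_range_succ']
  simp only [List.getD_cons_succ, List.getD_cons_zero, Nat.cast_add, Nat.cast_one, Nat.cast_zero,
    sub_zero]
  rw [add_sub_assoc, ← sum_sub_distrib, add_comm]
  congr 1
  refine sum_congr rfl fun x _ => ?_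
  rw [← sum_sub_distrib]
  exact sum_congr rfl fun y _ => by ring

theorem contentSum_append (l₁ l₂ : List ℕ) :
    contentSum (l₁ ++ l₂) = contentSum l₁ + contentSum l₂ - l₁.length * l₂.sum := by
  induction l₁ with
  | nil => simp [contentSum_nil]
  | cons a t ih =>
    rw [List.cons_append, contentSum_cons, contentSum_cons, ih]
    push_cast [List.sum_append, List.length_cons]
    ring

theorem two_mul_contentSum_replicate (r q : ℕ) :
    2 * contentSum (List.replicate r q) = r * q * ((q : ℤ) - r) := by
  induction r with
  | zero => simp [contentSum_nil]
  | succ r ih =>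
    rw [List.replicate_succ, contentSum_cons, mul_sub, mul_add, ih,
      two_mul_sum_range_natCast]
    simp only [List.sum_replicate, smul_eq_mul]
    push_cast
    ring

theorem two_mul_contentSum_le {D : List ℕ} {p : ℕ} (hD : ∀ x ∈ D, x ≤ p) :
    2 * contentSum D ≤ ((p : ℤ) - 1) * D.sum := by
  induction D with
  | nil => simp [contentSum_nil]
  | cons a t ih =>
    have ha : (a : ℤ) ≤ p := by exact_mod_cast hD a List.mem_cons_self
    have ht := ih fun x hx => hD x (List.mem_cons_of_mem a hx)
    have hs : (0 : ℤ) ≤ t.sum := by positivity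
    rw [contentSum_cons, mul_sub, mul_add, two_mul_sum_range_natCast, List.sum_cons,
      Nat.cast_add]
    nlinarith

theorem two_mul_contentSum_lt {D : List ℕ} {p : ℕ} (hpos : ∀ x ∈ D, 0 < x) (hle : ∀ x ∈ D, x ≤ p)
    (hne : D ≠ []) : 2 * contentSum D < p * D.sum := by
  obtain ⟨a, ha⟩ := List.exists_mem_of_ne_nil D hne
  have hsum : (0 : ℤ) < D.sum := by exact_mod_cast (hpos a ha).trans_le (List.le_sum_of_mem ha)
  linarith [two_mul_contentSum_le hle]

theorem two_mul_contentSum_replicate_append (r q : ℕ) (D : List ℕ) :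
    2 * contentSum (List.replicate r q ++ D) =
      (List.replicate r q ++ D).sum * ((q : ℤ) - r) +
        (2 * contentSum D - D.sum * ((q : ℤ) + r)) := by
  rw [contentSum_append, mul_sub, mul_add, two_mul_contentSum_replicate, List.sum_append,
    List.sum_replicate, List.length_replicate, smul_eq_mul]
  push_cast
  ring

theorem List.eq_replicate_count_append {l : List ℕ} {q : ℕ} (hl : l.Pairwise (· ≥ ·))
    (hq : ∀ x ∈ l, x ≤ q) : ∃ D, l = replicate (l.count q) q ++ D ∧ ∀ x ∈ D, x < q := by
  induction l with
  | nil => exact ⟨[], by simp, by simp⟩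
  | cons a t ih =>
    rw [List.pairwise_cons] at hl
    obtain rfl | haq := (hq a mem_cons_self).eq_or_lt
    · obtain ⟨D, ht, hD⟩ := ih hl.2 fun x hx => hq x (mem_cons_of_mem a hx)
      exact ⟨D, by rw [count_cons_self, replicate_succ, cons_append, ← ht], hD⟩
    · have hlt : ∀ x ∈ a :: t, x < q := by
        intro x hx
        rcases mem_cons.mp hx with rfl | hx
        exacts [haq, (hl.1 x hx).trans_lt haq]
      refine ⟨a :: t, ?_, hlt⟩
      rw [count_eq_zero_of_not_mem fun h => lt_irrefl q (hlt q h), replicate_zero, nil_append]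

/-- 2/n Σ ct(b) = ct(b₂) = q - r (with q the first part, r the number of parts equal to q,
so b₂ is the removable box of largest content) iff λ is a rectangle. -/
theorem stmt4 (l : List ℕ) (h : IsPartition l) (hne : l ≠ []) (n : ℕ) (hn : l.sum = n) :
    2 / (n : ℚ) * (contentSum l : ℚ) =
        ((l.head hne : ℚ) - (l.count (l.head hne) : ℚ)) ↔
      ∀ x ∈ l, x = l.head hne := by
  obtain ⟨hsorted, hpos⟩ := h
  set q := l.head hne
  set r := l.count q
  obtain ⟨D, hl, hDq⟩ :=
    List.eq_replicate_count_append (q := q) hsorted fun x hx => hsorted.rel_head hx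
  have hn0 : (n : ℚ) ≠ 0 := by
    obtain ⟨a, ha⟩ := List.exists_mem_of_ne_nil l hne
    exact_mod_cast ((hpos a ha).trans_le (hn ▸ List.le_sum_of_mem ha)).ne'
  have hrect : (∀ x ∈ l, x = q) ↔ D = [] := by
    rw [hl]
    refine ⟨fun hall => List.eq_nil_iff_forall_not_mem.mpr fun x hx => ?_, fun hD => ?_⟩
    · exact (hDq x hx).ne (hall x (List.mem_append_right _ hx))
    · simp [hD]
  have hdefect := two_mul_contentSum_replicate_append r q D
  rw [← hl, hn] at hdefect
  have hcast : (2 * contentSum l : ℚ) = ((q : ℚ) - r) * n ↔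
      2 * contentSum l = ((q : ℤ) - r) * n := by
    norm_cast
  rw [hrect, div_mul_eq_mul_div, div_eq_iff hn0, hcast, hdefect]
  constructor
  · intro heq
    by_contra hD
    have hlt := two_mul_contentSum_lt (fun x hx => hpos x (hl ▸ List.mem_append_right _ hx))
      (fun x hx => (hDq x hx).le) hD
    have hsum : (0 : ℤ) ≤ D.sum := by positivity
    nlinarith
  · rintro rfl
    rw [contentSum_nil, List.sum_nil]
    push_cast
    ring
end

section
/- For a nonempty partition λ of n with q columns (i.e., λ_1 = q) and more than one row, and any integer e ≥ 2, setting s so that s/e = 1 − (2/(en))Σ_{b∈λ} ct(b) (equivalently c_λ = 0 for (λ,∅)), the quantity d + (q−1)c with c = 1/e, d = 1/2 − (2/(en))Σ ct(b) is strictly greater than 1/2. -/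
/-!
Row `x` (counted from `0`) of length `m ≤ q` has twice its content sum equal to
`m (m - 1) - 2 x m ≤ m (q - 1) - 2 x m`. Summing over the rows gives
`2 Σ ct(b) ≤ n (q - 1)`, and the second row (`x = 1`, nonempty) makes the inequality strict:
`q - 1 > (2/n) Σ ct(b)`. Dividing by `e > 0` gives the claim.
-/

theorem List.sum_range_getD {M : Type*} [AddCommMonoid M] (l : List M) :
    ∑ x ∈ Finset.range l.length, l.getD x 0 = l.sum := by
  rw [Finset.sum_range, ← Fin.sum_univ_getElem]
  exact Finset.sum_congr rfl fun i _ => List.getD_eq_getElem l 0 i.isLt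

theorem two_mul_sum_range_sub (m : ℕ) (x : ℤ) :
    2 * ∑ y ∈ Finset.range m, ((y : ℤ) - x) = m * (m - 1) - 2 * x * m := by
  induction m with
  | zero => simp
  | succ k ih =>
    rw [Finset.sum_range_succ, mul_add, ih]
    push_cast
    ring

theorem two_mul_sum_range_sub_le {m q : ℕ} (hm : m ≤ q) (x : ℤ) :
    2 * ∑ y ∈ Finset.range m, ((y : ℤ) - x) ≤ m * ((q : ℤ) - 1) - 2 * x * m := by
  rw [two_mul_sum_range_sub]
  have : (m : ℤ) ≤ q := by exact_mod_cast hm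
  nlinarith [Int.natCast_nonneg m]

theorem IsPartition.getD_le_head {l : List ℕ} (h : IsPartition l) (hne : l ≠ []) (x : ℕ) :
    l.getD x 0 ≤ l.head hne := by
  rcases lt_or_ge x l.length with hx | hx
  · rw [List.getD_eq_getElem l 0 hx]
    exact h.1.rel_head (List.getElem_mem hx)
  · rw [List.getD_eq_default l 0 hx]
    exact Nat.zero_le _

theorem IsPartition.two_mul_contentSum_lt {l : List ℕ} (h : IsPartition l) (hne : l ≠ [])
    (hrows : 1 < l.length) :
    2 * contentSum l < (l.sum : ℤ) * ((l.head hne : ℤ) - 1) := by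
  have hrow : ∀ x ∈ Finset.range l.length,
      2 * ∑ y ∈ Finset.range (l.getD x 0), ((y : ℤ) - x) ≤
        (l.getD x 0 : ℤ) * ((l.head hne : ℤ) - 1) - 2 * x * (l.getD x 0) :=
    fun x _ => two_mul_sum_range_sub_le (h.getD_le_head hne x) x
  have hsecond : 0 < l.getD 1 0 := by
    rw [List.getD_eq_getElem l 0 hrows]
    exact h.2 _ (List.getElem_mem hrows)
  calc 2 * contentSum l
      < ∑ x ∈ Finset.range l.length, (l.getD x 0 : ℤ) * ((l.head hne : ℤ) - 1) := by
        rw [contentSum, Finset.mul_sum]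
        refine Finset.sum_lt_sum (fun x hx => (hrow x hx).trans ?_)
          ⟨1, Finset.mem_range.mpr hrows, (hrow 1 (Finset.mem_range.mpr hrows)).trans_lt ?_⟩
        · have : (0 : ℤ) ≤ 2 * x * (l.getD x 0) := by positivity
          linarith
        · have : (0 : ℤ) < l.getD 1 0 := by exact_mod_cast hsecond
          push_cast
          linarith
    _ = (l.sum : ℤ) * ((l.head hne : ℤ) - 1) := by
        rw [← Finset.sum_mul, ← l.sum_range_getD]
        push_cast
        rfl

/-- For a nonempty partition of n with largest part q and more than one row,
with c = 1/e and d = 1/2 - (2/(en))Σ ct(b), one has d + (q-1)c > 1/2. -/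
theorem stmt8 (l : List ℕ) (h : IsPartition l) (hne : l ≠ []) (n q : ℕ)
    (hn : l.sum = n) (hq : l.head hne = q) (hrows : 1 < l.length)
    (e : ℤ) (he : 2 ≤ e) :
    (1/2 - 2 / ((e : ℚ) * (n : ℚ)) * (contentSum l : ℚ)) +
      ((q : ℚ) - 1) * (1 / (e : ℚ)) > 1/2 := by
  have hcontent : 2 * (contentSum l : ℚ) < n * ((q : ℚ) - 1) := by
    have := h.two_mul_contentSum_lt hne hrows
    rw [hn, hq] at this
    exact_mod_cast this
  have hn_pos : (0 : ℚ) < n := by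
    rw [← hn]
    exact_mod_cast List.sum_pos l h.2 hne
  have he_pos : (0 : ℚ) < e := by exact_mod_cast (by omega : (0 : ℤ) < e)
  have hdiff : (1/2 - 2 / ((e : ℚ) * n) * contentSum l) + ((q : ℚ) - 1) * (1 / e) - 1/2
      = (n * ((q : ℚ) - 1) - 2 * contentSum l) / (e * n) := by
    field_simp
    ring
  rw [gt_iff_lt, ← sub_pos, hdiff]
  exact div_pos (by linarith) (by positivity)
end
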